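/- For any θ ∈ ℝ with 0 < |θ| ≤ z*, where z* = argmax_{z≥0} μ'(z)z², the function x ↦ μ'(xθ)x² on [-1,1] is maximized at x = 1 (and x = -1), with maximum value μ'(θ). -/

import Mathlib

noncomputable def μ (z : ℝ) : ℝ := 1 / (1 + Real.exp (-z))

noncomputable def f (z : ℝ) : ℝ := deriv μ z * z ^ 2

/-!
Since `μ` is the sigmoid `σ`, `μ' = σ (1 - σ)` is even and
`f'(z) = μ'(z) · z · (2 - z (2σ(z) - 1))`, where `z (2σ(z) - 1) = z tanh (z / 2)` is strictly
increasing on `[0, ∞)`. Hence `f` cannot decrease anywhere on `[0, z*]`: a point `c < z*` with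
`c (2σ(c) - 1) ≥ 2` would make `f` strictly decreasing on `[c, z*]`, so `f c > f z*`. For
`|x| ≤ 1` this gives `f (x θ) = f |x θ| ≤ f |θ| = f θ`, and dividing by `θ²` is the claim.
-/

open Real Set

lemma μ_eq_sigmoid : μ = sigmoid := by
  funext z
  rw [μ, sigmoid_def, one_div]

lemma deriv_μ_eq (z : ℝ) : deriv μ z = sigmoid z * (1 - sigmoid z) := by
  rw [μ_eq_sigmoid, deriv_sigmoid]

lemma deriv_μ_pos (z : ℝ) : 0 < deriv μ z := by
  rw [deriv_μ_eq]
  exact mul_pos (sigmoid_pos z) (sub_pos.2 (sigmoid_lt_one z))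

lemma deriv_μ_neg (z : ℝ) : deriv μ (-z) = deriv μ z := by
  rw [deriv_μ_eq, deriv_μ_eq, sigmoid_neg]
  ring

lemma f_eq (z : ℝ) : f z = sigmoid z * (1 - sigmoid z) * z ^ 2 := by
  rw [f, deriv_μ_eq]

lemma f_neg (z : ℝ) : f (-z) = f z := by
  rw [f, f, deriv_μ_neg, neg_sq]

lemma f_abs (z : ℝ) : f |z| = f z := by
  rcases abs_choice z with h | h <;> rw [h]
  exact f_neg z

lemma hasDerivAt_f (z : ℝ) :
    HasDerivAt f (deriv μ z * z * (2 - z * (2 * sigmoid z - 1))) z := by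
  have hσ := hasDerivAt_sigmoid z
  rw [funext f_eq, deriv_μ_eq]
  refine ((hσ.mul (hσ.const_sub 1)).mul (hasDerivAt_pow 2 z)).congr_deriv ?_
  simp only [Pi.mul_apply]
  ring

lemma continuous_f : Continuous f :=
  continuous_iff_continuousAt.2 fun z => (hasDerivAt_f z).continuousAt

lemma strictMonoOn_mul_two_mul_sigmoid_sub_one :
    StrictMonoOn (fun z => z * (2 * sigmoid z - 1)) (Ici 0) := by
  intro a ha b _ hab
  have hσ : sigmoid a < sigmoid b := sigmoid_lt hab
  have hσa : 1 / 2 ≤ sigmoid a := by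
    simpa [one_div] using sigmoid_le (mem_Ici.1 ha)
  dsimp only
  nlinarith [mem_Ici.1 ha]

lemma f_strictMonoOn_Icc {b : ℝ} (h : ∀ x ∈ Ioo 0 b, x * (2 * sigmoid x - 1) < 2) :
    StrictMonoOn f (Icc 0 b) := by
  refine strictMonoOn_of_deriv_pos (convex_Icc 0 b) continuous_f.continuousOn fun x hx => ?_
  rw [interior_Icc] at hx
  rw [(hasDerivAt_f x).deriv]
  exact mul_pos (mul_pos (deriv_μ_pos x) hx.1) (sub_pos.2 (h x hx))

lemma f_strictAntiOn_Icc {a b : ℝ} (ha : 0 ≤ a) (h : 2 ≤ a * (2 * sigmoid a - 1)) :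
    StrictAntiOn f (Icc a b) := by
  refine strictAntiOn_of_deriv_neg (convex_Icc a b) continuous_f.continuousOn fun x hx => ?_
  rw [interior_Icc] at hx
  rw [(hasDerivAt_f x).deriv]
  have hx0 : 0 < x := ha.trans_lt hx.1
  have hgt : 2 < x * (2 * sigmoid x - 1) :=
    h.trans_lt (strictMonoOn_mul_two_mul_sigmoid_sub_one ha hx0.le hx.1)
  exact mul_neg_of_pos_of_neg (mul_pos (deriv_μ_pos x) hx0) (sub_neg.2 hgt)

lemma monotoneOn_f_of_forall_le {zstar : ℝ} (hmax : ∀ z ∈ Ici (0 : ℝ), f z ≤ f zstar) :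
    MonotoneOn f (Icc 0 zstar) := by
  by_cases h : ∀ x ∈ Ioo 0 zstar, x * (2 * sigmoid x - 1) < 2
  · exact (f_strictMonoOn_Icc h).monotoneOn
  push Not at h
  obtain ⟨c, hc, hpc⟩ := h
  have hlt : f zstar < f c :=
    f_strictAntiOn_Icc hc.1.le hpc (left_mem_Icc.2 hc.2.le) (right_mem_Icc.2 hc.2.le) hc.2
  exact absurd (hmax c hc.1.le) hlt.not_ge

theorem one_dim_H_optimal_design_small_theta_general (θ zstar : ℝ)
    (hmax : ∀ z ∈ Set.Ici (0 : ℝ), f z ≤ f zstar)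
    (hθpos : 0 < |θ|) (hθle : |θ| ≤ zstar) :
    (∀ x ∈ Set.Icc (-1 : ℝ) 1, deriv μ (x * θ) * x ^ 2 ≤ deriv μ θ) ∧
    deriv μ ((1 : ℝ) * θ) * (1 : ℝ) ^ 2 = deriv μ θ ∧
    deriv μ ((-1 : ℝ) * θ) * (-1 : ℝ) ^ 2 = deriv μ θ := by
  refine ⟨fun x hx => ?_, by simp, by simp [deriv_μ_neg]⟩
  have hxθ : |x * θ| ≤ |θ| := by
    rw [abs_mul]
    exact mul_le_of_le_one_left (abs_nonneg θ) (abs_le.2 hx)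
  have hf : f (x * θ) ≤ f θ := by
    rw [← f_abs, ← f_abs θ]
    exact monotoneOn_f_of_forall_le hmax ⟨abs_nonneg _, hxθ.trans hθle⟩
      ⟨abs_nonneg θ, hθle⟩ hxθ
  rw [f, f, mul_pow, ← mul_assoc] at hf
  exact le_of_mul_le_mul_right hf (pow_pos hθpos 2 |>.trans_eq (sq_abs θ))

theorem one_dim_H_optimal_design_small_theta (θ zstar : ℝ)
    (hzpos : 0 ≤ zstar) (hmax : ∀ z ∈ Set.Ici (0 : ℝ), f z ≤ f zstar)
    (hθpos : 0 < |θ|) (hθle : |θ| ≤ zstar) :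
    (∀ x ∈ Set.Icc (-1 : ℝ) 1, deriv μ (x * θ) * x ^ 2 ≤ deriv μ θ) ∧
    deriv μ ((1 : ℝ) * θ) * (1 : ℝ) ^ 2 = deriv μ θ ∧
    deriv μ ((-1 : ℝ) * θ) * (-1 : ℝ) ^ 2 = deriv μ θ :=
  one_dim_H_optimal_design_small_theta_general θ zstar hmax hθpos hθle
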